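/- arXiv:1905.09748 — 2 statements merged into one kernel-verified Lean document; each statement's English description precedes it below -/
import Mathlib

section
/- Let K = dcl(K) be small in a monster model of a stable theory, let a be an n-primitive element over K and let L = dcl(K, a). For b ∈ acl(K), the following are equivalent: (1) b ∈ dcl(a, K); (2) the tuple (a, b) is an n-primitive element over K. -/
open FirstOrder Set

namespace PaperMT

variable (L : FirstOrder.Language) (M : Type) [L.Structure M]

/-- Definable closure of `A`, computed via automorphisms (valid in a monster model). -/
def dcl (A : Set M) : Set M :=
  {x | ∀ σ : M ≃[L] M, (∀ a ∈ A, σ a = a) → σ x = x}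

/-- Algebraic closure of `A`, computed via automorphisms (valid in a monster model):
the elements with finite orbit under `Aut(𝔠/A)`. -/
def acl (A : Set M) : Set M :=
  {x | Set.Finite {y | ∃ σ : M ≃[L] M, (∀ a ∈ A, σ a = a) ∧ σ x = y}}

/-- A partial elementary map defined on `A`. -/
def IsElementaryOn (A : Set M) (f : M → M) : Prop :=
  ∀ (n : ℕ) (φ : L.Formula (Fin n)) (v : Fin n → M),
    (∀ i, v i ∈ A) → (φ.Realize v ↔ φ.Realize (f ∘ v))

/-- Idealized monster model: strongly homogeneous, i.e. every partial elementary map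
extends to an automorphism. -/
def IsMonster : Prop :=
  ∀ (A : Set M) (f : M → M), IsElementaryOn L M A f →
    ∃ σ : M ≃[L] M, ∀ a ∈ A, σ a = f a

/-- Stability: no formula has the order property in `M`. -/
def IsStable : Prop :=
  ∀ (m n : ℕ) (φ : L.Formula (Fin m ⊕ Fin n)) (a : ℕ → Fin m → M) (b : ℕ → Fin n → M),
    ¬ ∀ i j : ℕ, (φ.Realize (Sum.elim (a i) (b j)) ↔ i ≤ j)

/-- Elimination of imaginaries for finite sets: every finite set has a code. -/
def HasCodes : Prop :=
  ∀ S : Set M, S.Finite → ∃ c : M, ∀ σ : M ≃[L] M, (σ c = c ↔ σ '' S = S)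

/-- `E ⊆ F` is a regular extension: `dcl F ∩ acl E = dcl E`. -/
def IsRegular (E F : Set M) : Prop :=
  dcl L M F ∩ acl L M E = dcl L M E

/-- `K ⊆ E` is a Galois extension of small definably closed substructures. -/
structure IsGaloisExt (K E : Set M) : Prop where
  subset : K ⊆ E
  dcl_base : dcl L M K = K
  dcl_ext : dcl L M E = E
  subset_acl : E ⊆ acl L M K
  invariant : ∀ σ : M ≃[L] M, (∀ a ∈ K, σ a = a) → σ '' E ⊆ E

/-- The set of restrictions to `E` of automorphisms fixing `K` pointwise:
a concrete incarnation of the Galois group `G(E/K)`. -/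
def galMaps (K E : Set M) : Set (E → M) :=
  {g | ∃ σ : M ≃[L] M, (∀ a ∈ K, σ a = a) ∧ ∀ x : E, g x = σ x}

end PaperMT

namespace PaperMT

variable (L : FirstOrder.Language) (M : Type) [L.Structure M]

/-- The orbit of a tuple `t` under automorphisms fixing `K` pointwise. -/
def tupleOrb (K : Set M) {ι : Type} (t : ι → M) : Set (ι → M) :=
  {s | ∃ σ : M ≃[L] M, (∀ a ∈ K, σ a = a) ∧ ∀ i, s i = σ (t i)}

/-- Two tuples are conjugated over `K` if some automorphism over `K` maps one to the
other. -/
def ConjTuple (K : Set M) {ι : Type} (t s : ι → M) : Prop :=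
  ∃ σ : M ≃[L] M, (∀ a ∈ K, σ a = a) ∧ ∀ i, s i = σ (t i)

/-- `t` is an `n`-primitive tuple over `K` (Definition 3.20): its entries are algebraic
over `K`, its orbit over `K` has exactly `n` elements, and for any tuple `e` enumerating
this orbit, the orbit of `e` (as one long tuple) again has exactly `n` elements. -/
def IsNPrimitive (K : Set M) (n : ℕ) {ι : Type} (t : ι → M) : Prop :=
  (∀ i, t i ∈ acl L M K) ∧ (tupleOrb L M K t).ncard = n ∧
    ∀ e : Fin n → (ι → M), Function.Injective e → Set.range e = tupleOrb L M K t →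
      (tupleOrb L M K (fun p : Fin n × ι => e p.1 p.2)).ncard = n

end PaperMT

namespace PaperMT.Aux

open FirstOrder PaperMT Set

variable {L : FirstOrder.Language} {M : Type} [L.Structure M] {K : Set M}

lemma fix_symm {σ : M ≃[L] M} (h : ∀ x ∈ K, σ x = x) : ∀ x ∈ K, σ.symm x = x := by
  intro x hx
  conv_lhs => rw [← h x hx]
  exact σ.symm_apply_apply x

lemma fix_comp {σ τ : M ≃[L] M} (hσ : ∀ x ∈ K, σ x = x) (hτ : ∀ x ∈ K, τ x = x) :
    ∀ x ∈ K, (σ.comp τ) x = x := fun x hx => by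
  simp only [FirstOrder.Language.Equiv.comp_apply, hτ x hx, hσ x hx]

/-- If `b ∈ dcl(K ∪ {a})` then `σ a = τ a` implies `σ b = τ b` for `σ, τ ∈ G(K)`. -/
lemma key {a b : M} (hb : b ∈ dcl L M (K ∪ {a}))
    {σ τ : M ≃[L] M} (hσ : ∀ x ∈ K, σ x = x) (hτ : ∀ x ∈ K, τ x = x)
    (hab : σ a = τ a) : σ b = τ b := by
  have hfix : ∀ x ∈ K ∪ {a}, (τ.symm.comp σ) x = x := by
    rintro x (hx | rfl)
    · exact fix_comp (fix_symm hτ) hσ x hx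
    · simp only [FirstOrder.Language.Equiv.comp_apply, hab]
      exact τ.symm_apply_apply x
  have h := hb (τ.symm.comp σ) hfix
  simp only [FirstOrder.Language.Equiv.comp_apply] at h
  calc σ b = τ (τ.symm (σ b)) := (τ.apply_symm_apply _).symm
    _ = τ b := by rw [h]

/-- The first-coordinate projection. -/
def π : (Fin 2 → M) → (Unit → M) := fun s _ => s 0

lemma image_pi (a b : M) : π '' tupleOrb L M K ![a, b] = tupleOrb L M K (fun _ : Unit => a) := by
  ext s
  constructor
  · rintro ⟨t, ⟨σ, hσ, ht⟩, rfl⟩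
    refine ⟨σ, hσ, fun i => ?_⟩
    have := ht 0
    simpa [π] using this
  · rintro ⟨σ, hσ, hs⟩
    refine ⟨fun i => σ (![a, b] i), ⟨σ, hσ, fun i => rfl⟩, ?_⟩
    funext u
    simp [π, hs u]

lemma injOn_pi_of_dcl {a b : M} (hb : b ∈ dcl L M (K ∪ {a})) :
    Set.InjOn π (tupleOrb L M K ![a, b]) := by
  rintro s ⟨σ, hσ, hs⟩ t ⟨τ, hτ, ht⟩ h
  have h0 : σ a = τ a := by
    have := congrFun h ()
    simp only [π, hs 0, ht 0, Matrix.cons_val_zero] at this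
    exact this
  have h1 : σ b = τ b := key hb hσ hτ h0
  funext i
  rw [hs i, ht i]
  fin_cases i <;> simp [h0, h1]

end PaperMT.Aux

open PaperMT in
/-- **Lemma 3.22.** Let `a` be an `n`-primitive element over `K` and `L' = dcl(K ∪ {a})`.
For `b ∈ acl(K)`, the following are equivalent: (1) `b ∈ dcl(K ∪ {a})`;
(2) the pair `(a, b)` is an `n`-primitive tuple over `K`. -/
theorem mem_dcl_iff_pair_nPrimitive
    (L : FirstOrder.Language) (M : Type) [L.Structure M]
    (hmonster : IsMonster L M) (hstable : IsStable L M) (hEI : HasCodes L M)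
    (K : Set M) (hK : dcl L M K = K)
    (n : ℕ) (hn : 0 < n)
    (a : M) (ha : IsNPrimitive L M K n (fun _ : Unit => a))
    (b : M) (hb : b ∈ acl L M K) :
    b ∈ dcl L M (K ∪ {a}) ↔ IsNPrimitive L M K n ![a, b] := by
  classical
  obtain ⟨haAcl, haCard, haEnum⟩ := ha
  constructor
  · -- (1) → (2)
    intro hbdcl
    have hinj := PaperMT.Aux.injOn_pi_of_dcl (K := K) hbdcl
    have himg := PaperMT.Aux.image_pi (L := L) (M := M) (K := K) a b
    have hcard : (tupleOrb L M K ![a, b]).ncard = n := by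
      rw [← Set.ncard_image_of_injOn hinj, himg, haCard]
    refine ⟨?_, hcard, ?_⟩
    · intro i
      fin_cases i
      · simpa using haAcl ()
      · simpa using hb
    · intro e heinj herange
      have hmem : ∀ i, e i ∈ tupleOrb L M K ![a, b] := by
        intro i; rw [← herange]; exact ⟨i, rfl⟩
      choose τ hτfix hτ using hmem
      set e' : Fin n → (Unit → M) := fun i => PaperMT.Aux.π (e i) with he'def
      have he'inj : Function.Injective e' := by
        intro i j h
        apply heinj
        apply hinj (by rw [← herange]; exact ⟨i, rfl⟩) (by rw [← herange]; exact ⟨j, rfl⟩)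
        exact h
      have he'range : Set.range e' = tupleOrb L M K (fun _ : Unit => a) := by
        have : Set.range e' = PaperMT.Aux.π '' Set.range e := by
          ext s
          constructor
          · rintro ⟨i, rfl⟩
            exact ⟨e i, ⟨i, rfl⟩, rfl⟩
          · rintro ⟨t, ⟨i, rfl⟩, rfl⟩
            exact ⟨i, rfl⟩
        rw [this, herange, himg]
      have hlongA := haEnum e' he'inj he'range
      have hPimg : (fun s : Fin n × Fin 2 → M => fun p : Fin n × Unit => s (p.1, 0)) ''
          tupleOrb L M K (fun p : Fin n × Fin 2 => e p.1 p.2)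
          = tupleOrb L M K (fun p : Fin n × Unit => e' p.1 p.2) := by
        ext s
        constructor
        · rintro ⟨t, ⟨σ, hσ, ht⟩, rfl⟩
          exact ⟨σ, hσ, fun p => ht (p.1, 0)⟩
        · rintro ⟨σ, hσ, hs⟩
          refine ⟨fun p => σ (e p.1 p.2), ⟨σ, hσ, fun p => rfl⟩, ?_⟩
          funext p
          exact (hs p).symm
      have hPinj : Set.InjOn (fun s : Fin n × Fin 2 → M => fun p : Fin n × Unit => s (p.1, 0))
          (tupleOrb L M K (fun p : Fin n × Fin 2 => e p.1 p.2)) := by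
        rintro s ⟨σ, hσ, hs⟩ t ⟨τ', hτ', ht⟩ h
        have hA : ∀ i : Fin n, σ (e i 0) = τ' (e i 0) := by
          intro i
          have hh := congrFun h (i, ())
          simp only at hh
          rw [hs (i, 0), ht (i, 0)] at hh
          exact hh
        have hB : ∀ i : Fin n, σ (e i 1) = τ' (e i 1) := by
          intro i
          have hea : e i 0 = (τ i) a := by simpa using hτ i 0
          have heb : e i 1 = (τ i) b := by simpa using hτ i 1
          have h0 : (σ.comp (τ i)) a = (τ'.comp (τ i)) a := by
            simp only [FirstOrder.Language.Equiv.comp_apply, ← hea]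
            exact hA i
          have hk := PaperMT.Aux.key hbdcl (PaperMT.Aux.fix_comp hσ (hτfix i))
            (PaperMT.Aux.fix_comp hτ' (hτfix i)) h0
          simp only [FirstOrder.Language.Equiv.comp_apply] at hk
          rw [heb]
          exact hk
        funext p
        obtain ⟨i, j⟩ := p
        rw [hs (i, j), ht (i, j)]
        fin_cases j
        · exact hA i
        · exact hB i
      rw [← Set.ncard_image_of_injOn hPinj, hPimg]
      exact hlongA
  · -- (2) → (1)
    rintro ⟨-, habCard, -⟩
    intro σ hσ
    have hσK : ∀ x ∈ K, σ x = x := fun x hx => hσ x (Or.inl hx)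
    have hσa : σ a = a := hσ a (Or.inr rfl)
    have hfin : (tupleOrb L M K ![a, b]).Finite := by
      by_contra hinf
      rw [Set.Infinite.ncard hinf] at habCard
      omega
    have hinj : Set.InjOn PaperMT.Aux.π (tupleOrb L M K ![a, b]) := by
      apply Set.injOn_of_ncard_image_eq _ hfin
      rw [PaperMT.Aux.image_pi, haCard, habCard]
    have hmem1 : (fun i => σ (![a, b] i)) ∈ tupleOrb L M K ![a, b] :=
      ⟨σ, hσK, fun i => rfl⟩
    have hmem2 : ![a, b] ∈ tupleOrb L M K ![a, b] :=
      ⟨FirstOrder.Language.Equiv.refl L M, fun x _ => by simp, fun i => by simp⟩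
    have hpi : PaperMT.Aux.π (fun i => σ (![a, b] i)) = PaperMT.Aux.π ![a, b] := by
      funext u
      simp [PaperMT.Aux.π, hσa]
    have heq := hinj hmem1 hmem2 hpi
    have h1 := congrFun heq 1
    simpa using h1
end

section
/- Let (F, ∂) be a differential subfield of a monster model of DCF₀ such that (F, ∂) is PAC as a differential field. Then the underlying field F is a PAC field: every regular pure-field extension E of F admits a differential structure making it a regular differential extension of (F, ∂), so F is existentially closed in E as a field. -/
open MvPolynomial

namespace PaperDiff

/-- `F` is existentially closed in the differential extension `(E, D)` in the language of
differential rings: any finite system of differential polynomial equations and an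
inequation over `F` with a solution in `E` has a solution in `F`. Differential
polynomials in `n` differential variables of order `< m` are encoded as ordinary
polynomials in the variables `(i, j) ↦ D^[j] (x i)`. -/
def DiffEC (F : Type) [Field F] (dF : Derivation ℤ F F)
    (E : Type) [Field E] [Algebra F E] (D : Derivation ℤ E E) : Prop :=
  ∀ (n m : ℕ) (S : Finset (MvPolynomial (Fin n × Fin m) F))
    (q : MvPolynomial (Fin n × Fin m) F),
    (∃ e : Fin n → E,
      (∀ p ∈ S, aeval (fun ij : Fin n × Fin m => (fun x => D x)^[ij.2] (e ij.1)) p = 0) ∧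
      aeval (fun ij : Fin n × Fin m => (fun x => D x)^[ij.2] (e ij.1)) q ≠ 0) →
    ∃ e : Fin n → F,
      (∀ p ∈ S, aeval (fun ij : Fin n × Fin m => (fun x => dF x)^[ij.2] (e ij.1)) p = 0) ∧
      aeval (fun ij : Fin n × Fin m => (fun x => dF x)^[ij.2] (e ij.1)) q ≠ 0

/-- `F` is existentially closed in the field extension `E` in the language of rings. -/
def FieldEC (F : Type) [Field F] (E : Type) [Field E] [Algebra F E] : Prop :=
  ∀ (n : ℕ) (S : Finset (MvPolynomial (Fin n) F)) (q : MvPolynomial (Fin n) F),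
    (∃ e : Fin n → E, (∀ p ∈ S, aeval e p = 0) ∧ aeval e q ≠ 0) →
    ∃ e : Fin n → F, (∀ p ∈ S, aeval e p = 0) ∧ aeval e q ≠ 0

end PaperDiff

/-!
In characteristic `0` every field extension `E / F` is separably generated, hence formally
smooth. A derivation `∂ : F → E` is the same as the ring map `a ↦ a + (∂ a) ε` into `E[ε]`;
using it to make `E[ε]` an `F`-algebra, formal smoothness lifts the identity of `E` along
`E[ε] → E` to some `x ↦ x + (D x) ε`, and `D` is a derivation of `E` extending `∂`. Thus every
regular field extension of `F` is a regular differential extension of `(F, ∂)`, and polynomial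
systems are differential polynomial systems of order `0`.
-/

open TrivSqZeroExt

namespace Derivation

variable {K L : Type*} [CommRing K] [CommRing L] [Algebra K L]

def toTrivSqZeroExt (d : Derivation ℤ K L) : K →+* TrivSqZeroExt L L where
  toFun a := inl (algebraMap K L a) + inr (d a)
  map_one' := by simp
  map_mul' a b := by
    ext
    · simp only [fst_mul, fst_add, fst_inl, fst_inr, add_zero, map_mul]
    · simp only [snd_mul, snd_add, fst_add, snd_inl, snd_inr, fst_inl, fst_inr, zero_add,
        add_zero, leibniz, op_smul_eq_smul, smul_eq_mul, Algebra.smul_def]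
  map_zero' := by simp
  map_add' a b := by ext <;> simp

def ofSectionTrivSqZeroExt (s : L →+* TrivSqZeroExt L L) (hs : ∀ x, (s x).fst = x) :
    Derivation ℤ L L where
  toFun x := (s x).snd
  map_add' x y := by simp only [map_add, snd_add]
  map_smul' n x := by simp only [map_zsmul, snd_smul, RingHom.id_apply]
  map_one_eq_zero' := by simp
  leibniz' x y := by
    change (s (x * y)).snd = x • (s y).snd + y • (s x).snd
    rw [map_mul, snd_mul, hs, hs, op_smul_eq_smul]

theorem exists_extension_of_formallySmooth [Algebra.FormallySmooth K L]
    (d : Derivation ℤ K L) : ∃ D : Derivation ℤ L L, ∀ a, D (algebraMap K L a) = d a := by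
  let _ : Algebra K (TrivSqZeroExt L L) := d.toTrivSqZeroExt.toAlgebra
  let fst : TrivSqZeroExt L L →ₐ[K] L :=
    { (fstHom L L L).toRingHom with
      commutes' := fun a => by simp [RingHom.algebraMap_toAlgebra, toTrivSqZeroExt] }
  let s := Algebra.FormallySmooth.liftOfSurjective (AlgHom.id K L) fst
    (fun x => ⟨inl x, rfl⟩) ⟨2, kerIdeal_sq L L⟩
  have hs (x : L) : (s x).fst = x := Algebra.FormallySmooth.liftOfSurjective_apply _ fst _ _ x
  refine ⟨ofSectionTrivSqZeroExt s.toRingHom hs, fun a => ?_⟩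
  change (s (algebraMap K L a)).snd = d a
  rw [s.commutes]
  simp [RingHom.algebraMap_toAlgebra, toTrivSqZeroExt]

end Derivation

theorem Algebra.FormallySmooth.of_charZero (K L : Type*) [Field K] [CharZero K] [Field L]
    [Algebra K L] : Algebra.FormallySmooth K L := by
  obtain ⟨s, hs⟩ := exists_isTranscendenceBasis K L
  have := hs.isAlgebraic_field
  exact .of_algebraicIndependent_of_isSeparable hs.1

theorem Derivation.exists_extension_of_charZero {K L : Type*} [Field K] [CharZero K] [Field L]
    [Algebra K L] (d : Derivation ℤ K L) :
    ∃ D : Derivation ℤ L L, ∀ a, D (algebraMap K L a) = d a :=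
  have := Algebra.FormallySmooth.of_charZero K L
  d.exists_extension_of_formallySmooth

namespace PaperDiff

theorem aeval_rename_orderZero {F A : Type*} [CommRing F] [CommRing A] [Algebra F A] {n : ℕ}
    (δ : A → A) (e : Fin n → A) (p : MvPolynomial (Fin n) F) :
    aeval (fun ij : Fin n × Fin 1 => δ^[ij.2] (e ij.1)) (rename (fun i => (i, 0)) p) =
      aeval e p := by
  rw [aeval_rename]
  rfl

theorem DiffEC.fieldEC {F E : Type} [Field F] [Field E] [Algebra F E] {dF : Derivation ℤ F F}
    {D : Derivation ℤ E E} (h : DiffEC F dF E D) : FieldEC F E := by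
  classical
  rintro n S q ⟨e, he, hq⟩
  obtain ⟨f, hf, hfq⟩ := h n 1 (S.image (rename fun i => (i, 0))) (rename (fun i => (i, 0)) q)
    ⟨e, Finset.forall_mem_image.mpr fun p hp => by rw [aeval_rename_orderZero]; exact he p hp,
      by rwa [aeval_rename_orderZero]⟩
  refine ⟨f, fun p hp => ?_, ?_⟩
  · rw [← aeval_rename_orderZero (fun x => dF x)]
    exact hf _ (Finset.mem_image_of_mem _ hp)
  · rwa [← aeval_rename_orderZero (fun x => dF x)]

end PaperDiff

open PaperDiff in
/-- **PAC differential fields have PAC underlying fields.** If the differential field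
`(F, ∂)` of characteristic `0` is PAC as a differential field — i.e. existentially closed
(in the language of differential rings) in every differential field extension `(E, D)`
extending `∂` whose underlying field extension is regular — then the underlying field `F`
is a PAC field: `F` is existentially closed (in the language of rings) in every regular
field extension of `F`. -/
theorem PAC_differential_implies_PAC_field
    (F : Type) [Field F] [CharZero F] (dF : Derivation ℤ F F)
    (hPAC : ∀ (E : Type) [Field E] [Algebra F E] (D : Derivation ℤ E E),
      (∀ x : F, D (algebraMap F E x) = algebraMap F E (dF x)) →
      (∀ x : E, IsAlgebraic F x → ∃ y : F, algebraMap F E y = x) →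
      DiffEC F dF E D) :
    ∀ (E : Type) [Field E] [Algebra F E],
      (∀ x : E, IsAlgebraic F x → ∃ y : F, algebraMap F E y = x) →
      FieldEC F E := by
  intro E _ _ hreg
  obtain ⟨D, hD⟩ := ((Algebra.linearMap F E).compDer dF).exists_extension_of_charZero
  exact (hPAC E D hD hreg).fieldEC
end
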